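/- arXiv:1905.00364 — 5 statements merged into one kernel-verified Lean document; each statement's English description precedes it below -/
import Mathlib

section
/- For a choice function defined by sequentially accepting candidates in a fixed priority order subject to maximum quotas on populations (with no minimum targets), the choice function satisfies the irrelevance of rejected contracts: if c is in C but not in Ch(C), then Ch(C \ {c}) = Ch(C). -/
/-! Shared definitions: PMA choice functions (greedy max-quota, Algorithm 1, Algorithm 2),
laminarity, deferred acceptance, and stability notions. -/

namespace PMA

variable {α : Type*} [DecidableEq α]

/-- A population constraint: a set of candidates together with a bound
(a maximum quota or a minimum target, depending on context). -/
abbrev Pop (α : Type*) := Finset α × ℕ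

/-- A set `S` respects all maximum quotas. -/
def Feasible (maxQ : List (Pop α)) (S : Finset α) : Prop :=
  ∀ q ∈ maxQ, (S ∩ q.1).card ≤ q.2

instance (maxQ : List (Pop α)) (S : Finset α) : Decidable (Feasible maxQ S) :=
  List.decidableBAll _ _

/-- Greedy pass: traverse candidates in the given order, accepting each candidate
whose addition violates no maximum quota. -/
def pass2 (maxQ : List (Pop α)) : List α → Finset α → Finset α
  | [], S => S
  | c :: rest, S =>
      if Feasible maxQ (insert c S) then pass2 maxQ rest (insert c S)
      else pass2 maxQ rest S

/-- Candidate `c` belongs to some population whose minimum target is not yet met by `S`. -/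
def HelpsMin (minT : List (Pop α)) (S : Finset α) (c : α) : Prop :=
  ∃ p ∈ minT, c ∈ p.1 ∧ (S ∩ p.1).card < p.2

instance (minT : List (Pop α)) (S : Finset α) (c : α) : Decidable (HelpsMin minT S c) :=
  List.decidableBEx _ _

/-- First pass of Algorithm 1: traverse candidates in order, accepting (subject to
maximum quotas) those who help meet some unmet minimum target. -/
def pass1 (maxQ minT : List (Pop α)) : List α → Finset α → Finset α
  | [], S => S
  | c :: rest, S =>
      if HelpsMin minT S c ∧ Feasible maxQ (insert c S) then
        pass1 maxQ minT rest (insert c S)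
      else pass1 maxQ minT rest S

/-- Algorithm 1 choice function: two passes over the candidates of `C`,
in the priority order given by the list `order`. -/
def choice1 (maxQ minT : List (Pop α)) (order : List α) (C : Finset α) : Finset α :=
  pass2 maxQ (order.filter fun c => decide (c ∈ C))
    (pass1 maxQ minT (order.filter fun c => decide (c ∈ C)) ∅)

/-- The greedy max-quota choice function (no minimum targets), with the priority order
given by the linear order on candidates. -/
def greedy [LinearOrder α] (maxQ : List (Pop α)) (C : Finset α) : Finset α :=
  pass2 maxQ (C.sort (· ≤ ·)) ∅

/-- The greedy max-quota choice function with an explicit priority list. -/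
def greedyL (maxQ : List (Pop α)) (order : List α) (C : Finset α) : Finset α :=
  pass2 maxQ (order.filter fun c => decide (c ∈ C)) ∅

/-- The number of populations with a minimum target not yet met by `S` to which `c` belongs. -/
def nUnmet (minT : List (Pop α)) (S : Finset α) (c : α) : ℕ :=
  (minT.filter fun p => decide (c ∈ p.1 ∧ (S ∩ p.1).card < p.2)).length

/-- The candidates of `R` maximizing the number of unmet minimum targets they help. -/
def bestSet [LinearOrder α] (minT : List (Pop α)) (S R : Finset α) : Finset α :=
  R.filter fun c => ∀ d ∈ R, nUnmet minT S d ≤ nUnmet minT S c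

lemma bestSet_nonempty [LinearOrder α] (minT : List (Pop α)) (S : Finset α) {R : Finset α}
    (hR : R.Nonempty) : (bestSet minT S R).Nonempty := by
  obtain ⟨b, hb, hmax⟩ := R.exists_max_image (nUnmet minT S) hR
  exact ⟨b, Finset.mem_filter.mpr ⟨hb, hmax⟩⟩

/-- The next candidate processed by Algorithm 2: among `R`, maximize the number of unmet
minimum targets helped, breaking ties by the priority order. -/
def pick [LinearOrder α] (minT : List (Pop α)) (S : Finset α) {R : Finset α}
    (hR : R.Nonempty) : α :=
  (bestSet minT S R).min' (bestSet_nonempty minT S hR)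

lemma pick_mem [LinearOrder α] (minT : List (Pop α)) (S : Finset α) {R : Finset α}
    (hR : R.Nonempty) : pick minT S hR ∈ R :=
  Finset.filter_subset _ _ (Finset.min'_mem _ _)

/-- Main loop of Algorithm 2: `R` is the set of unprocessed candidates, `S` the chosen set. -/
def choice2Go [LinearOrder α] (maxQ minT : List (Pop α)) (R S : Finset α) : Finset α :=
  if hR : R.Nonempty then
    choice2Go maxQ minT (R.erase (pick minT S hR))
      (if Feasible maxQ (insert (pick minT S hR) S) then insert (pick minT S hR) S else S)
  else S
  termination_by R.card
  decreasing_by exact Finset.card_erase_lt_of_mem (pick_mem minT S hR)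

/-- Algorithm 2 choice function. -/
def choice2 [LinearOrder α] (maxQ minT : List (Pop α)) (C : Finset α) : Finset α :=
  choice2Go maxQ minT C ∅

/-- A family of populations is laminar: any two are disjoint or nested. -/
def Laminar (pops : List (Pop α)) : Prop :=
  ∀ p ∈ pops, ∀ q ∈ pops, Disjoint p.1 q.1 ∨ p.1 ⊆ q.1 ∨ q.1 ⊆ p.1

/-- The sets of the populations carrying a positive minimum target. -/
def minTargetSets (minT : List (Pop α)) : Set (Finset α) :=
  {P | ∃ t, (P, t) ∈ minT ∧ 0 < t}

/-- A family of sets is a union of pairwise-disjoint chains: it can be partitioned into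
subfamilies, each totally ordered by inclusion, with sets in different subfamilies disjoint. -/
def UnionOfDisjointChains (F : Set (Finset α)) : Prop :=
  ∃ Part : Set (Set (Finset α)), ⋃₀ Part = F ∧ (∀ c ∈ Part, IsChain (· ⊆ ·) c) ∧
    Part.Pairwise fun c c' => ∀ P ∈ c, ∀ Q ∈ c', Disjoint P Q

section DA

variable {β : Type*} [Fintype α] [DecidableEq β]

/-- The institution to which candidate `c` currently applies: the most-preferred institution
on her list that has not yet rejected her (`none` if her list is exhausted). -/
def applyTo (prefs : α → List β) (rej : α → Finset β) (c : α) : Option β :=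
  (prefs c).find? fun m => decide (m ∉ rej c)

/-- The set of candidates currently applying to institution `m`. -/
def applicants (prefs : α → List β) (rej : α → Finset β) (m : β) : Finset α :=
  Finset.univ.filter fun c => applyTo prefs rej c = some m

/-- One round of candidate-proposing deferred acceptance: each candidate applies to her
most-preferred not-yet-rejecting institution; each institution keeps its choice from its
applicants and rejects the rest. `rej c` is the set of institutions that have rejected `c`. -/
def daRound (Ch : β → Finset α → Finset α) (prefs : α → List β) (rej : α → Finset β) :
    α → Finset β := fun c =>
  match applyTo prefs rej c with
  | none => rej c
  | some m => if c ∈ Ch m (applicants prefs rej m) then rej c else insert m (rej c)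

variable [Fintype β]

/-- The rejection sets at the end of candidate-proposing deferred acceptance (running enough
rounds to guarantee that a fixed point, i.e. a round with no rejections, has been reached). -/
def daRej (Ch : β → Finset α → Finset α) (prefs : α → List β) : α → Finset β :=
  (daRound Ch prefs)^[Fintype.card α * Fintype.card β + 1] fun _ => ∅

/-- The matching produced by candidate-proposing deferred acceptance. -/
def daMatch (Ch : β → Finset α → Finset α) (prefs : α → List β) : α → Option β :=
  applyTo prefs (daRej Ch prefs)

end DA

section Stability

variable {β : Type*} [DecidableEq β]

/-- Candidate `c` strictly prefers institution `m` to the assignment `o`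
(being unmatched, `none`, is worse than any institution on her list). -/
def Prefers (prefs : α → List β) (c : α) (m : β) : Option β → Prop
  | none => m ∈ prefs c
  | some m' => m ∈ prefs c ∧ (prefs c).idxOf m < (prefs c).idxOf m'

/-- Candidate `c` weakly prefers assignment `o` to assignment `o'`. -/
def WeaklyPrefers (prefs : α → List β) (c : α) (o o' : Option β) : Prop :=
  o = o' ∨ ∃ m, o = some m ∧ Prefers prefs c m o'

variable [Fintype α]

/-- The set of candidates assigned to institution `m` by the matching `M`. -/
def assignedTo (M : α → Option β) (m : β) : Finset α :=
  Finset.univ.filter fun c => M c = some m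

/-- Individual rationality: candidates are matched only to listed institutions, and each
institution chooses all candidates assigned to it. -/
def IndivRational (Ch : β → Finset α → Finset α) (prefs : α → List β) (M : α → Option β) :
    Prop :=
  (∀ c m, M c = some m → m ∈ prefs c) ∧ ∀ m, Ch m (assignedTo M m) = assignedTo M m

/-- `(c, m)` is a blocking pair for the matching `M`. -/
def Blocks (Ch : β → Finset α → Finset α) (prefs : α → List β) (M : α → Option β)
    (c : α) (m : β) : Prop :=
  Prefers prefs c m (M c) ∧ c ∈ Ch m (insert c (assignedTo M m))

/-- Stability: individual rationality plus no blocking pairs. -/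
def StableMatching (Ch : β → Finset α → Finset α) (prefs : α → List β) (M : α → Option β) :
    Prop :=
  IndivRational Ch prefs M ∧ ∀ c m, ¬ Blocks Ch prefs M c m

/-- One step of the candidate-Pareto-improvement stage: a blocking pair `(m, c)` such that
`c` can be added to `m` without rejecting anyone is resolved by assigning `c` to `m`. -/
def ParetoStep [DecidableEq α] (Ch : β → Finset α → Finset α) (prefs : α → List β)
    (M M' : α → Option β) : Prop :=
  ∃ m c, Prefers prefs c m (M c) ∧
    Ch m (insert c (assignedTo M m)) = insert c (assignedTo M m) ∧
    M' = Function.update M c (some m)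

end Stability

end PMA


open PMA

/-! The greedy pass only ever enlarges the chosen set, so a candidate missing from the final
choice was already rejected at its own step, where the chosen set was left unchanged.
Deleting that step from the traversal therefore changes nothing, and erasing `c` from `C`
deletes exactly that step from the sorted list of candidates. -/

theorem Finset.sort_erase {α : Type*} [DecidableEq α] (r : α → α → Prop) [DecidableRel r]
    [IsTrans α r] [Std.Antisymm r] [Std.Total r] (s : Finset α) (a : α) :
    (s.erase a).sort r = (s.sort r).filter (· ≠ a) := by
  refine List.Perm.eq_of_pairwise' (Finset.pairwise_sort _ _)
    ((Finset.pairwise_sort _ _).filter _) ?_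
  rw [← Multiset.coe_eq_coe, ← Multiset.filter_coe, Finset.sort_eq, Finset.sort_eq,
    ← Finset.filter_val, Finset.filter_ne']

namespace PMA

variable {α : Type*} [DecidableEq α] (maxQ : List (Pop α))

theorem subset_pass2 : ∀ (l : List α) (S : Finset α), S ⊆ pass2 maxQ l S
  | [], _ => subset_rfl
  | a :: l, S => by
    unfold pass2
    split
    · exact (Finset.subset_insert a S).trans (subset_pass2 l _)
    · exact subset_pass2 l S

theorem pass2_cons_of_notMem {a : α} {l : List α} {S : Finset α}
    (h : a ∉ pass2 maxQ (a :: l) S) : pass2 maxQ (a :: l) S = pass2 maxQ l S := by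
  have hinfeas : ¬ Feasible maxQ (insert a S) := fun hfeas => by
    rw [pass2, if_pos hfeas] at h
    exact h (subset_pass2 maxQ l _ (Finset.mem_insert_self a S))
  rw [pass2, if_neg hinfeas]

theorem pass2_filter_ne_of_notMem {c : α} :
    ∀ {l : List α} {S : Finset α}, c ∉ pass2 maxQ l S →
      pass2 maxQ (l.filter (· ≠ c)) S = pass2 maxQ l S
  | [], _, _ => rfl
  | a :: l, S, h => by
    by_cases hac : a = c
    · subst hac
      have hstep := pass2_cons_of_notMem maxQ h
      rw [hstep] at h ⊢
      rw [List.filter_cons_of_neg (by simp)]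
      exact pass2_filter_ne_of_notMem h
    · rw [List.filter_cons_of_pos (by simpa using hac)]
      unfold pass2 at h ⊢
      split_ifs at h ⊢ <;> exact pass2_filter_ne_of_notMem h

end PMA

theorem greedy_irc_general {α : Type*} [DecidableEq α] [LinearOrder α]
    (maxQ : List (Pop α)) (C : Finset α) (c : α)
    (hrej : c ∉ greedy maxQ C) :
    greedy maxQ (C.erase c) = greedy maxQ C := by
  rw [greedy, greedy, Finset.sort_erase]
  exact pass2_filter_ne_of_notMem maxQ hrej

/-- The greedy max-quota choice function satisfies irrelevance of
rejected contracts: if `c ∈ C` but `c ∉ Ch(C)`, then `Ch(C \ {c}) = Ch(C)`. -/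
theorem greedy_irc {α : Type*} [DecidableEq α] [LinearOrder α]
    (maxQ : List (Pop α)) (C : Finset α) (c : α)
    (hc : c ∈ C) (hrej : c ∉ greedy maxQ C) :
    greedy maxQ (C.erase c) = greedy maxQ C :=
  greedy_irc_general maxQ C c hrej
end

section
/- If the family of populations of a PMA is laminar with only maximum quotas (no minimum targets), then for every candidate set C and c in Ch(C), either Ch(C \ {c}) = Ch(C) \ {c}, or Ch(C \ {c}) = (Ch(C) \ {c}) ∪ {d} for some single candidate d in C not in Ch(C). -/
open PMA

/-! Run the greedy algorithm on `C` and on `C \ {c}` side by side. Up to `c` they agree; after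
`c` the run without `c` holds the set of the other run minus `c` until the first candidate `e`
that it accepts while the other run rejects it. That rejection comes from a quota `q ∋ c, e`
which the common set `U` fills up to one unit. From then on the runs hold `U ∪ {c}` and `U ∪ {e}`
and take the same decisions: later candidates of `q` are rejected by both, and by laminarity
every other quota either contains both or neither of `c` and `e`, or lies inside `q` and so cannot
be violated by accepting a candidate outside `q`. -/

theorem Finset.card_insert_inter_of_mem {α : Type*} [DecidableEq α] {x : α} {S P : Finset α}
    (hx : x ∈ P) (hxS : x ∉ S) : (insert x S ∩ P).card = (S ∩ P).card + 1 := by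
  rw [Finset.insert_inter_of_mem hx,
    Finset.card_insert_of_notMem fun h => hxS (Finset.mem_of_mem_inter_left h)]

theorem Finset.sort_erase_s3 {α : Type*} [DecidableEq α] [LinearOrder α] (s : Finset α) (a : α) :
    (s.erase a).sort = s.sort.erase a := by
  have hnd := s.sort_nodup (· ≤ ·)
  rw [← (List.toFinset_sort _ (hnd.erase a)).mpr ((s.pairwise_sort _).erase a)]
  congr 1
  ext x
  rw [List.mem_toFinset, hnd.mem_erase_iff, Finset.mem_sort, Finset.mem_erase]

namespace PMA

section Greedy

variable {α : Type*} [DecidableEq α] (maxQ : List (Pop α))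

theorem Feasible.mono {S T : Finset α} (hT : Feasible maxQ T) (h : S ⊆ T) : Feasible maxQ S :=
  fun q hq => (Finset.card_le_card (Finset.inter_subset_inter_right h)).trans (hT q hq)

def accept (e : α) (S : Finset α) : Finset α :=
  if Feasible maxQ (insert e S) then insert e S else S

theorem pass2_cons (e : α) (M : List α) (S : Finset α) :
    pass2 maxQ (e :: M) S = pass2 maxQ M (accept maxQ e S) := by
  rw [pass2, accept]
  split_ifs <;> rfl

theorem accept_of_mem {e : α} {S : Finset α} (hS : Feasible maxQ S) (he : e ∈ S) :
    accept maxQ e S = S := by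
  rw [accept, Finset.insert_eq_of_mem he, if_pos hS]

theorem accept_subset_insert (e : α) (S : Finset α) : accept maxQ e S ⊆ insert e S := by
  unfold accept
  split_ifs
  exacts [subset_rfl, Finset.subset_insert e S]

theorem mem_of_mem_pass2 {x : α} {M : List α} {S : Finset α} (h : x ∈ pass2 maxQ M S) :
    x ∈ S ∨ x ∈ M := by
  induction M generalizing S with
  | nil => exact Or.inl h
  | cons e M ih =>
    rw [pass2_cons] at h
    rcases ih h with hx | hx
    · rcases Finset.mem_insert.mp (accept_subset_insert maxQ e S hx) with rfl | hx
      · exact Or.inr List.mem_cons_self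
      · exact Or.inl hx
    · exact Or.inr (List.mem_cons_of_mem e hx)

/-- `c` and `d` are interchangeable for the greedy algorithm on top of `U`: the quota `q` they
share is exactly full with either of them. -/
structure Exchangeable (q : Pop α) (U : Finset α) (c d : α) : Prop where
  mem_maxQ : q ∈ maxQ
  left_mem : c ∈ q.1
  right_mem : d ∈ q.1
  left_notMem : c ∉ U
  right_notMem : d ∉ U
  tight : (U ∩ q.1).card + 1 = q.2
  feasible_left : Feasible maxQ (insert c U)
  feasible_right : Feasible maxQ (insert d U)

namespace Exchangeable

variable {maxQ} {q : Pop α} {U : Finset α} {c d : α}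

theorem symm (h : Exchangeable maxQ q U c d) : Exchangeable maxQ q U d c :=
  ⟨h.mem_maxQ, h.right_mem, h.left_mem, h.right_notMem, h.left_notMem, h.tight,
    h.feasible_right, h.feasible_left⟩

theorem not_feasible_insert (h : Exchangeable maxQ q U c d) {e : α} (he : e ∈ q.1)
    (heU : e ∉ insert c U) : ¬ Feasible maxQ (insert e (insert c U)) := fun hF => by
  have hq := hF q h.mem_maxQ
  rw [Finset.card_insert_inter_of_mem he heU,
    Finset.card_insert_inter_of_mem h.left_mem h.left_notMem] at hq
  have := h.tight
  omega

theorem left_notMem_insert (h : Exchangeable maxQ q U c d) {e : α} (he : e ∉ q.1) :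
    c ∉ insert e U :=
  Finset.mem_insert.not.mpr (not_or.mpr ⟨fun hce => he (hce ▸ h.left_mem), h.left_notMem⟩)

theorem accept_insert_left (h : Exchangeable maxQ q U c d) {e : α} (he : e ∈ q.1 ∨ e ∈ U) :
    accept maxQ e (insert c U) = insert c U := by
  by_cases heU : e ∈ insert c U
  · exact accept_of_mem maxQ h.feasible_left heU
  · have heq : e ∈ q.1 := he.resolve_right fun h' => heU (Finset.mem_insert_of_mem h')
    rw [accept, if_neg (h.not_feasible_insert heq heU)]

theorem feasible_insert_right (hlam : Laminar maxQ) (h : Exchangeable maxQ q U c d) {e : α}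
    (heq : e ∉ q.1) (hF : Feasible maxQ (insert e (insert c U))) :
    Feasible maxQ (insert e (insert d U)) := by
  intro p hp
  have hFp := hF p hp
  rcases hlam p hp q h.mem_maxQ with hdisj | hpq | hqp
  · rw [Finset.insert_comm,
      Finset.insert_inter_of_notMem (Finset.disjoint_right.mp hdisj h.right_mem)]
    rwa [Finset.insert_comm,
      Finset.insert_inter_of_notMem (Finset.disjoint_right.mp hdisj h.left_mem)] at hFp
  · rw [Finset.insert_inter_of_notMem fun hep => heq (hpq hep)]
    exact h.feasible_right p hp
  · rw [Finset.insert_comm,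
      Finset.card_insert_inter_of_mem (hqp h.right_mem) (h.symm.left_notMem_insert heq)]
    rwa [Finset.insert_comm,
      Finset.card_insert_inter_of_mem (hqp h.left_mem) (h.left_notMem_insert heq)] at hFp

theorem exists_accept_insert (hlam : Laminar maxQ) (h : Exchangeable maxQ q U c d) (e : α) :
    ∃ U', Exchangeable maxQ q U' c d ∧ accept maxQ e (insert c U) = insert c U' ∧
      accept maxQ e (insert d U) = insert d U' := by
  by_cases he : e ∈ q.1 ∨ e ∈ U
  · exact ⟨U, h, h.accept_insert_left he, h.symm.accept_insert_left he⟩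
  obtain ⟨heq, heU⟩ := not_or.mp he
  have hF : Feasible maxQ (insert e (insert c U)) ↔ Feasible maxQ (insert e (insert d U)) :=
    ⟨h.feasible_insert_right hlam heq, h.symm.feasible_insert_right hlam heq⟩
  by_cases hFc : Feasible maxQ (insert e (insert c U))
  · refine ⟨insert e U, ⟨h.mem_maxQ, h.left_mem, h.right_mem,
      h.left_notMem_insert heq, h.symm.left_notMem_insert heq,
      by rw [Finset.insert_inter_of_notMem heq]; exact h.tight,
      by rw [Finset.insert_comm]; exact hFc, by rw [Finset.insert_comm]; exact hF.mp hFc⟩,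
      ?_, ?_⟩
    · rw [accept, if_pos hFc, Finset.insert_comm]
    · rw [accept, if_pos (hF.mp hFc), Finset.insert_comm]
  · exact ⟨U, h, by rw [accept, if_neg hFc], by rw [accept, if_neg (hF.not.mp hFc)]⟩

theorem exists_pass2_insert (hlam : Laminar maxQ) (M : List α)
    (h : Exchangeable maxQ q U c d) : ∃ V, Exchangeable maxQ q V c d ∧
      pass2 maxQ M (insert c U) = insert c V ∧ pass2 maxQ M (insert d U) = insert d V := by
  induction M generalizing U with
  | nil => exact ⟨U, h, rfl, rfl⟩
  | cons e M ih =>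
    obtain ⟨U', h', hc, hd⟩ := h.exists_accept_insert hlam e
    rw [pass2_cons, pass2_cons, hc, hd]
    exact ih h'

end Exchangeable

theorem exists_exchangeable_of_not_feasible {c e : α} {S : Finset α} (hcS : c ∉ S)
    (hc : Feasible maxQ (insert c S)) (he : Feasible maxQ (insert e S))
    (hce : ¬ Feasible maxQ (insert e (insert c S))) : ∃ q, Exchangeable maxQ q S c e := by
  have heS : e ∉ insert c S := fun h => hce (by rwa [Finset.insert_eq_of_mem h])
  obtain ⟨q, hq, hcard⟩ : ∃ q ∈ maxQ, ¬ (insert e (insert c S) ∩ q.1).card ≤ q.2 := by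
    simpa [Feasible] using hce
  have hcq : c ∈ q.1 := by
    by_contra hcq
    rw [Finset.insert_comm, Finset.insert_inter_of_notMem hcq] at hcard
    exact hcard (he q hq)
  have heq : e ∈ q.1 := by
    by_contra heq
    rw [Finset.insert_inter_of_notMem heq] at hcard
    exact hcard (hc q hq)
  have heS' : e ∉ S := fun h => heS (Finset.mem_insert_of_mem h)
  refine ⟨q, hq, hcq, heq, hcS, heS', ?_, hc, he⟩
  have hle := he q hq
  rw [Finset.card_insert_inter_of_mem heq heS'] at hle
  rw [Finset.card_insert_inter_of_mem heq heS, Finset.card_insert_inter_of_mem hcq hcS] at hcard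
  omega

theorem pass2_eq_erase_or_insert_erase (hlam : Laminar maxQ) {c : α} (M : List α) (hcM : c ∉ M)
    {S : Finset α} (hcS : c ∉ S) (hc : Feasible maxQ (insert c S)) :
    pass2 maxQ M S = (pass2 maxQ M (insert c S)).erase c ∨
      ∃ d ∈ M, d ∉ pass2 maxQ M (insert c S) ∧
        pass2 maxQ M S = insert d ((pass2 maxQ M (insert c S)).erase c) := by
  induction M generalizing S with
  | nil => exact Or.inl (Finset.erase_insert hcS).symm
  | cons e M ih =>
    have hec : e ≠ c := fun h => hcM (h ▸ List.mem_cons_self)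
    have hcM' : c ∉ M := fun h => hcM (List.mem_cons_of_mem e h)
    by_cases hce : Feasible maxQ (insert e (insert c S))
    · have he : Feasible maxQ (insert e S) :=
        hce.mono maxQ (Finset.insert_subset_insert e (Finset.subset_insert c S))
      simp only [pass2, if_pos hce, if_pos he]
      rw [Finset.insert_comm e c]
      have hcS' : c ∉ insert e S := Finset.mem_insert.not.mpr (not_or.mpr ⟨hec.symm, hcS⟩)
      exact (ih hcM' hcS' (by rwa [Finset.insert_comm])).imp_right
        fun ⟨d, hd, h⟩ => ⟨d, List.mem_cons_of_mem e hd, h⟩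
    by_cases he : Feasible maxQ (insert e S)
    · obtain ⟨q, hq⟩ := exists_exchangeable_of_not_feasible maxQ hcS hc he hce
      obtain ⟨V, hV, hcV, heV⟩ := hq.exists_pass2_insert hlam M
      simp only [pass2, if_neg hce, if_pos he, hcV, heV, Finset.erase_insert hV.left_notMem]
      exact Or.inr ⟨e, List.mem_cons_self,
        Finset.mem_insert.not.mpr (not_or.mpr ⟨hec, hV.right_notMem⟩), rfl⟩
    · simp only [pass2, if_neg hce, if_neg he]
      exact (ih hcM' hcS hc).imp_right fun ⟨d, hd, h⟩ => ⟨d, List.mem_cons_of_mem e hd, h⟩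

theorem pass2_erase_eq_erase_or_insert_erase (hlam : Laminar maxQ) {c : α} (L : List α)
    (hL : L.Nodup) {S : Finset α} (hcS : c ∉ S) (hc : c ∈ pass2 maxQ L S) :
    pass2 maxQ (L.erase c) S = (pass2 maxQ L S).erase c ∨
      ∃ d ∈ L, d ∉ pass2 maxQ L S ∧
        pass2 maxQ (L.erase c) S = insert d ((pass2 maxQ L S).erase c) := by
  induction L generalizing S with
  | nil => exact absurd hc hcS
  | cons e M ih =>
    obtain ⟨heM, hM⟩ := List.nodup_cons.mp hL
    by_cases hec : e = c
    · subst hec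
      have he : Feasible maxQ (insert e S) := by
        by_contra he
        rw [pass2, if_neg he] at hc
        exact (mem_of_mem_pass2 maxQ hc).elim hcS heM
      rw [List.erase_cons_head, pass2, if_pos he]
      exact (pass2_eq_erase_or_insert_erase maxQ hlam M heM hcS he).imp_right
        fun ⟨d, hd, h⟩ => ⟨d, List.mem_cons_of_mem e hd, h⟩
    · rw [pass2_cons] at hc
      rw [List.erase_cons_tail (by simpa using hec), pass2_cons, pass2_cons]
      have hcS' : c ∉ accept maxQ e S := fun h =>
        (Finset.mem_insert.mp (accept_subset_insert maxQ e S h)).elim (fun h => hec h.symm) hcS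
      exact (ih hM hcS' hc).imp_right fun ⟨d, hd, h⟩ => ⟨d, List.mem_cons_of_mem e hd, h⟩

end Greedy

end PMA

theorem greedy_remove_chosen_general {α : Type*} [DecidableEq α] [LinearOrder α]
    (maxQ : List (Pop α)) (hlam : Laminar maxQ)
    (C : Finset α) (c : α) (hc : c ∈ greedy maxQ C) :
    greedy maxQ (C.erase c) = (greedy maxQ C).erase c ∨
      ∃ d ∈ C, d ∉ greedy maxQ C ∧
        greedy maxQ (C.erase c) = insert d ((greedy maxQ C).erase c) := by
  have h := pass2_erase_eq_erase_or_insert_erase maxQ hlam (C.sort (· ≤ ·)) (C.sort_nodup _)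
    (Finset.notMem_empty c) hc
  rw [← Finset.sort_erase_s3] at h
  exact h.imp_right fun ⟨d, hd, h⟩ => ⟨d, (Finset.mem_sort _).mp hd, h⟩

/-- For laminar populations with maximum quotas only: if `c ∈ Ch(C)` then
`Ch(C \ {c})` equals `Ch(C) \ {c}`, or `(Ch(C) \ {c}) ∪ {d}` for a single candidate
`d ∈ C` not chosen from `C`. -/
theorem greedy_remove_chosen {α : Type*} [DecidableEq α] [LinearOrder α]
    (maxQ : List (Pop α)) (hlam : Laminar maxQ)
    (C : Finset α) (c : α) (hcC : c ∈ C) (hc : c ∈ greedy maxQ C) :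
    greedy maxQ (C.erase c) = (greedy maxQ C).erase c ∨
      ∃ d ∈ C, d ∉ greedy maxQ C ∧
        greedy maxQ (C.erase c) = insert d ((greedy maxQ C).erase c) :=
  greedy_remove_chosen_general maxQ hlam C c hc
end

section
/- In a two-sided matching market where each institution's choice function is substitutable, satisfies irrelevance of rejected contracts, and satisfies the law of aggregate demand, and each candidate has a strict preference list over a subset of institutions, the candidate-proposing deferred acceptance algorithm terminates and produces a stable matching. -/
open PMA

/-!
Rejection sets only grow and there are at most `|α| * |β|` rejections, so the iteration reaches
a fixed point within the prescribed number of rounds. The invariant of the algorithm is that an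
institution that has rejected `c` would still not choose `c` from its current applicants together
with `c`. It survives a round because the applicants an institution holds keep applying to it, and
substitutability with irrelevance of rejected contracts give `Ch (A ∪ {c}) = Ch (Ch A ∪ {c})`:
a candidate rejected against `A` is rejected against any superset of `Ch A`. At a fixed point every
applicant is held, which is individual rationality, and each candidate has been rejected by every
institution she prefers to her own, which by the invariant rules out blocking pairs.
-/

theorem List.idxOf_le_idxOf_of_find?_eq_some {β : Type*} [DecidableEq β] {p : β → Bool}
    {l : List β} {a b : β} (h : l.find? p = some a) (hb : b ∈ l) (hpb : p b) :
    l.idxOf a ≤ l.idxOf b := by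
  obtain ⟨hpa, as, bs, rfl, has⟩ := List.find?_eq_some_iff_append.mp h
  have hbas : b ∉ as := fun hb' => by simpa [hpb] using has b hb'
  have haas : a ∉ as := fun ha' => by simpa [hpa] using has a ha'
  rw [List.idxOf_append_of_notMem hbas, List.idxOf_append_of_notMem haas, List.idxOf_cons_self]
  omega

theorem Function.isFixedPt_iterate_of_measure {γ : Type*} {f : γ → γ} (μ : γ → ℕ) {N : ℕ}
    (hbound : ∀ y, μ y ≤ N) (hlt : ∀ y, f y ≠ y → μ y < μ (f y)) (x : γ) :
    IsFixedPt f (f^[N + 1] x) := by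
  have key : ∀ n, IsFixedPt f (f^[n] x) ∨ n ≤ μ (f^[n] x) := by
    intro n
    induction n with
    | zero => exact Or.inr (Nat.zero_le _)
    | succ n ih =>
      rw [Function.iterate_succ_apply']
      by_cases hfix : IsFixedPt f (f^[n] x)
      · exact Or.inl hfix.apply
      · exact Or.inr ((ih.resolve_left hfix).trans_lt (hlt _ hfix))
  exact (key (N + 1)).resolve_right fun h => by linarith [hbound (f^[N + 1] x)]

namespace DeferredAcceptance

section ChoiceFunction

variable {α : Type*} [DecidableEq α]

def Substitutable (Ch : Finset α → Finset α) : Prop :=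
  ∀ (C : Finset α) (c c' : α), c ∈ Ch C → c ≠ c' → c ∈ Ch (C.erase c')

def IrrelevantRejected (Ch : Finset α → Finset α) : Prop :=
  ∀ (C : Finset α) (c : α), c ∈ C → c ∉ Ch C → Ch (C.erase c) = Ch C

variable {Ch : Finset α → Finset α}

theorem Substitutable.mem_choice_of_subset (hs : Substitutable Ch) {c : α} {D : Finset α}
    (hcD : c ∈ D) {E : Finset α} (hDE : D ⊆ E) (hc : c ∈ Ch E) : c ∈ Ch D := by
  induction E using Finset.strongInduction with
  | H E ih =>
    obtain rfl | hDE' := hDE.eq_or_ssubset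
    · exact hc
    obtain ⟨a, haE, haD⟩ := Finset.exists_of_ssubset hDE'
    exact ih _ (Finset.erase_ssubset haE) (Finset.subset_erase.mpr ⟨hDE, haD⟩)
      (hs E c a hc (ne_of_mem_of_not_mem hcD haD))

theorem IrrelevantRejected.choice_eq_of_subset (hi : IrrelevantRejected Ch) {D E : Finset α}
    (hChE : Ch E ⊆ D) (hDE : D ⊆ E) : Ch D = Ch E := by
  induction E using Finset.strongInduction with
  | H E ih =>
    obtain rfl | hDE' := hDE.eq_or_ssubset
    · rfl
    obtain ⟨a, haE, haD⟩ := Finset.exists_of_ssubset hDE'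
    have hErase : Ch (E.erase a) = Ch E := hi E a haE fun ha => haD (hChE ha)
    rw [← hErase]
    exact ih _ (Finset.erase_ssubset haE) (hErase ▸ hChE) (Finset.subset_erase.mpr ⟨hDE, haD⟩)

theorem choice_insert_choice (hCh : ∀ C, Ch C ⊆ C) (hs : Substitutable Ch)
    (hi : IrrelevantRejected Ch) (c : α) (A : Finset α) :
    Ch (insert c (Ch A)) = Ch (insert c A) := by
  refine hi.choice_eq_of_subset (fun d hd => ?_) (Finset.insert_subset_insert c (hCh A))
  rcases eq_or_ne d c with rfl | hdc
  · exact Finset.mem_insert_self d _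
  have hdA : d ∈ A := (Finset.mem_insert.mp (hCh _ hd)).resolve_left hdc
  exact Finset.mem_insert_of_mem (hs.mem_choice_of_subset hdA (Finset.subset_insert c A) hd)

theorem notMem_choice_insert_of_choice_subset (hCh : ∀ C, Ch C ⊆ C) (hs : Substitutable Ch)
    (hi : IrrelevantRejected Ch) {c : α} {A A' : Finset α} (hc : c ∉ Ch (insert c A))
    (hA : Ch A ⊆ A') : c ∉ Ch (insert c A') := by
  rw [← choice_insert_choice hCh hs hi] at hc
  exact fun hc' => hc (hs.mem_choice_of_subset (Finset.mem_insert_self c _)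
    (Finset.insert_subset_insert c hA) hc')

end ChoiceFunction

section Algorithm

variable {α β : Type*} [DecidableEq β]
  {Ch : β → Finset α → Finset α} {prefs : α → List β} {rej : α → Finset β} {c : α} {m : β}

theorem notMem_of_applyTo_eq_some (h : applyTo prefs rej c = some m) : m ∉ rej c := by
  simpa using List.find?_some h

theorem mem_prefs_of_applyTo_eq_some (h : applyTo prefs rej c = some m) : m ∈ prefs c :=
  List.mem_of_find?_eq_some h

theorem applyTo_congr {rej' : α → Finset β} (h : rej' c = rej c) :
    applyTo prefs rej' c = applyTo prefs rej c := by
  simp only [applyTo, h]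

theorem mem_of_prefers_applyTo (h : Prefers prefs c m (applyTo prefs rej c)) : m ∈ rej c := by
  by_contra hm
  rcases happ : applyTo prefs rej c with _ | m'
  · rw [happ] at h
    simpa [hm] using List.find?_eq_none.mp happ m h
  · rw [happ] at h
    have := List.idxOf_le_idxOf_of_find?_eq_some happ h.1 (by simpa using hm)
    exact absurd h.2 this.not_gt

variable [Fintype α]

theorem mem_applicants : c ∈ applicants prefs rej m ↔ applyTo prefs rej c = some m := by
  simp [applicants]

variable [DecidableEq α]

theorem mem_daRound_iff : m ∈ daRound Ch prefs rej c ↔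
    m ∈ rej c ∨ applyTo prefs rej c = some m ∧ c ∉ Ch m (applicants prefs rej m) := by
  rcases happ : applyTo prefs rej c with _ | m'
  · simp [daRound, happ]
  · by_cases hc : c ∈ Ch m' (applicants prefs rej m') <;> simp [daRound, happ, hc] <;> aesop

theorem subset_daRound : rej c ⊆ daRound Ch prefs rej c :=
  fun _ hm => mem_daRound_iff.mpr (Or.inl hm)

theorem choice_applicants_subset_applicants_daRound (hCh : ∀ m C, Ch m C ⊆ C) :
    Ch m (applicants prefs rej m) ⊆ applicants prefs (daRound Ch prefs rej) m := by
  intro d hd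
  have happ : applyTo prefs rej d = some m := mem_applicants.mp (hCh m _ hd)
  have hkept : daRound Ch prefs rej d = rej d := by
    ext m'
    rw [mem_daRound_iff, or_iff_left_iff_imp]
    rintro ⟨happ', hd'⟩
    exact absurd (Option.some_injective _ (happ.symm.trans happ') ▸ hd) hd'
  exact mem_applicants.mpr ((applyTo_congr hkept).trans happ)

variable (Ch prefs) in
def RejectionsJustified (rej : α → Finset β) : Prop :=
  ∀ c m, m ∈ rej c → c ∉ Ch m (insert c (applicants prefs rej m))

theorem RejectionsJustified.daRound (hCh : ∀ m C, Ch m C ⊆ C)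
    (hs : ∀ m, Substitutable (Ch m)) (hi : ∀ m, IrrelevantRejected (Ch m))
    (h : RejectionsJustified Ch prefs rej) :
    RejectionsJustified Ch prefs (daRound Ch prefs rej) := by
  intro c m hm
  have hrejected : c ∉ Ch m (insert c (applicants prefs rej m)) := by
    rcases mem_daRound_iff.mp hm with hm | ⟨happ, hc⟩
    · exact h c m hm
    · rwa [Finset.insert_eq_of_mem (mem_applicants.mpr happ)]
  exact notMem_choice_insert_of_choice_subset (hCh m) (hs m) (hi m) hrejected
    (choice_applicants_subset_applicants_daRound hCh)

theorem sum_card_lt_sum_card_daRound (h : daRound Ch prefs rej ≠ rej) :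
    ∑ c, (rej c).card < ∑ c, (daRound Ch prefs rej c).card := by
  obtain ⟨c, hc⟩ := Function.ne_iff.mp h
  exact Finset.sum_lt_sum (fun c _ => Finset.card_le_card subset_daRound)
    ⟨c, Finset.mem_univ c, Finset.card_lt_card (subset_daRound.ssubset_of_ne (Ne.symm hc))⟩

theorem stableMatching_applyTo (hCh : ∀ m C, Ch m C ⊆ C)
    (hfix : Function.IsFixedPt (daRound Ch prefs) rej) (hjust : RejectionsJustified Ch prefs rej) :
    StableMatching Ch prefs (applyTo prefs rej) := by
  refine ⟨⟨fun c m => mem_prefs_of_applyTo_eq_some, fun m => ?_⟩, fun c m ⟨hpref, hchosen⟩ => ?_⟩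
  · refine (hCh m _).antisymm fun c hc => ?_
    have happ : applyTo prefs rej c = some m := mem_applicants.mp hc
    by_contra hnc
    have hm : m ∈ daRound Ch prefs rej c := mem_daRound_iff.mpr (Or.inr ⟨happ, hnc⟩)
    exact notMem_of_applyTo_eq_some happ (hfix ▸ hm)
  · exact hjust c m (mem_of_prefers_applyTo hpref) hchosen

variable [Fintype β]

theorem daRej_isFixedPt : Function.IsFixedPt (daRound Ch prefs) (daRej Ch prefs) := by
  refine Function.isFixedPt_iterate_of_measure (fun rej => ∑ c, (rej c).card) (fun rej => ?_)
    (fun _ => sum_card_lt_sum_card_daRound) _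
  calc ∑ c, (rej c).card ≤ ∑ _c : α, Fintype.card β :=
        Finset.sum_le_sum fun c _ => Finset.card_le_univ _
    _ = Fintype.card α * Fintype.card β := by simp

theorem rejectionsJustified_daRej (hCh : ∀ m C, Ch m C ⊆ C)
    (hs : ∀ m, Substitutable (Ch m)) (hi : ∀ m, IrrelevantRejected (Ch m)) :
    RejectionsJustified Ch prefs (daRej Ch prefs) :=
  Function.Iterate.rec (RejectionsJustified Ch prefs)
    (fun _ _ hm => absurd hm (Finset.notMem_empty _))
    (fun _ hrej => hrej.daRound hCh hs hi) _

end Algorithm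

end DeferredAcceptance

open DeferredAcceptance in
theorem da_terminates_and_stable_general {α β : Type*} [Fintype α] [DecidableEq α]
    [Fintype β] [DecidableEq β]
    (Ch : β → Finset α → Finset α) (prefs : α → List β)
    (hchoice : ∀ m (C : Finset α), Ch m C ⊆ C)
    (hsub : ∀ m (C : Finset α) (c c' : α), c ∈ Ch m C → c ≠ c' → c ∈ Ch m (C.erase c'))
    (hirc : ∀ m (C : Finset α) (c : α), c ∈ C → c ∉ Ch m C → Ch m (C.erase c) = Ch m C) :
    daRound Ch prefs (daRej Ch prefs) = daRej Ch prefs ∧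
      StableMatching Ch prefs (daMatch Ch prefs) :=
  ⟨daRej_isFixedPt,
    stableMatching_applyTo hchoice daRej_isFixedPt (rejectionsJustified_daRej hchoice hsub hirc)⟩

/-- If every institution's choice function is substitutable and satisfies
irrelevance of rejected contracts and the law of aggregate demand, then candidate-proposing
deferred acceptance terminates (reaches a fixed point) and produces a stable matching. -/
theorem da_terminates_and_stable {α β : Type*} [Fintype α] [DecidableEq α]
    [Fintype β] [DecidableEq β]
    (Ch : β → Finset α → Finset α) (prefs : α → List β)
    (hchoice : ∀ m (C : Finset α), Ch m C ⊆ C)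
    (hnodup : ∀ c, (prefs c).Nodup)
    (hsub : ∀ m (C : Finset α) (c c' : α), c ∈ Ch m C → c ≠ c' → c ∈ Ch m (C.erase c'))
    (hirc : ∀ m (C : Finset α) (c : α), c ∈ C → c ∉ Ch m C → Ch m (C.erase c) = Ch m C)
    (hlad : ∀ m (C : Finset α) (c : α), c ∈ C → (Ch m (C.erase c)).card ≤ (Ch m C).card) :
    daRound Ch prefs (daRej Ch prefs) = daRej Ch prefs ∧
      StableMatching Ch prefs (daMatch Ch prefs) :=
  da_terminates_and_stable_general Ch prefs hchoice hsub hirc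
end

section
/- Truncation safety of candidate-proposing DA: for any profile of candidate preferences and any institution choice functions (arbitrary functions Ch: candidate sets → subsets with Ch(C) ⊆ C), if a candidate, submitting a truncation of her preference list (removing some institutions from the end), is assigned by DA to a certain institution, then submitting her full non-truncated list results in the same assignment for her. -/
open PMA

/-!
The institution `m` that the truncating candidate `c₀` obtains never rejects her, and rejection
sets only grow during DA. Hence in every round of the truncated run her first non-rejecting
institution lies in the kept prefix of her list, so she applies exactly where she would have
applied with her full list. The two runs therefore coincide round by round.
-/

namespace PMA

variable {α β : Type*} [DecidableEq α] [DecidableEq β]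

lemma applyTo_update_take {prefs : α → List β} {c₀ : α} {t : ℕ} {rej : α → Finset β} {m : β}
    (hm : m ∈ (prefs c₀).take t) (hr : m ∉ rej c₀) :
    applyTo (Function.update prefs c₀ ((prefs c₀).take t)) rej = applyTo prefs rej := by
  funext c
  by_cases hc : c = c₀
  · subst hc
    obtain ⟨x, hx⟩ : ∃ x, ((prefs c).take t).find? (fun b => decide (b ∉ rej c)) = some x := by
      rw [← Option.isSome_iff_exists, List.find?_isSome]
      exact ⟨m, hm, by simpa using hr⟩
    unfold applyTo
    rw [Function.update_self, hx, ← List.take_append_drop t (prefs c), List.find?_append, hx]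
    rfl
  · unfold applyTo
    rw [Function.update_of_ne hc]

variable [Fintype α]

lemma le_daRound (Ch : β → Finset α → Finset α) (prefs : α → List β) (rej : α → Finset β) :
    rej ≤ daRound Ch prefs rej := by
  intro c
  unfold daRound
  split
  · exact le_rfl
  · split_ifs
    · exact le_rfl
    · exact Finset.subset_insert _ _

lemma monotone_iterate_daRound (Ch : β → Finset α → Finset α) (prefs : α → List β)
    (rej : α → Finset β) : Monotone fun k => (daRound Ch prefs)^[k] rej :=
  monotone_nat_of_le_succ fun k => by
    rw [Function.iterate_succ_apply']
    exact le_daRound Ch prefs _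

lemma daRound_congr (Ch : β → Finset α → Finset α) {prefs prefs' : α → List β}
    {rej : α → Finset β} (h : applyTo prefs rej = applyTo prefs' rej) :
    daRound Ch prefs rej = daRound Ch prefs' rej := by
  unfold daRound applicants
  rw [h]

lemma iterate_daRound_update_take (Ch : β → Finset α → Finset α) {prefs : α → List β}
    {c₀ : α} {t : ℕ} {m : β} (hm : m ∈ (prefs c₀).take t) (rej : α → Finset β) (k : ℕ)
    (hr : m ∉ (daRound Ch (Function.update prefs c₀ ((prefs c₀).take t)))^[k] rej c₀) :
    (daRound Ch (Function.update prefs c₀ ((prefs c₀).take t)))^[k] rej =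
      (daRound Ch prefs)^[k] rej := by
  induction k with
  | zero => rfl
  | succ k ih =>
    have hr' := fun h => hr (monotone_iterate_daRound _ _ rej k.le_succ c₀ h)
    rw [Function.iterate_succ_apply', Function.iterate_succ_apply', ← ih hr',
      daRound_congr Ch (applyTo_update_take hm hr')]

end PMA

theorem da_truncation_safe_general {α β : Type*} [Fintype α] [DecidableEq α]
    [Fintype β] [DecidableEq β]
    (Ch : β → Finset α → Finset α)
    (prefs : α → List β) (c₀ : α) (t : ℕ) (m : β)
    (htrunc : daMatch Ch (Function.update prefs c₀ ((prefs c₀).take t)) c₀ = some m) :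
    daMatch Ch prefs c₀ = some m := by
  have hm : m ∈ (prefs c₀).take t := by
    simpa using List.mem_of_find?_eq_some htrunc
  have hr : m ∉ daRej Ch (Function.update prefs c₀ ((prefs c₀).take t)) c₀ := by
    simpa using List.find?_some htrunc
  have hrej : daRej Ch (Function.update prefs c₀ ((prefs c₀).take t)) = daRej Ch prefs :=
    iterate_daRound_update_take Ch hm _ _ hr
  unfold daMatch at htrunc ⊢
  rw [← hrej, ← applyTo_update_take hm hr, htrunc]

/-- Truncation safety of candidate-proposing DA: for arbitrary institution
choice functions (satisfying only `Ch(C) ⊆ C`), if a candidate submitting a truncation of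
her preference list is assigned to some institution, then submitting her full list results
in the same assignment for her. -/
theorem da_truncation_safe {α β : Type*} [Fintype α] [DecidableEq α]
    [Fintype β] [DecidableEq β]
    (Ch : β → Finset α → Finset α) (hchoice : ∀ m (C : Finset α), Ch m C ⊆ C)
    (prefs : α → List β) (c₀ : α) (t : ℕ) (m : β)
    (htrunc : daMatch Ch (Function.update prefs c₀ ((prefs c₀).take t)) c₀ = some m) :
    daMatch Ch prefs c₀ = some m :=
  da_truncation_safe_general Ch prefs c₀ t m htrunc
end

section
/- Sure-thing safety of candidate-proposing DA: if the choice function of institution m always chooses a given candidate c from any set of candidates containing c, then for any preference list that c submits which contains m, candidate-proposing DA assigns c either to m or to an institution that c ranked above m, regardless of the preference lists of all other candidates. -/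
open PMA

/-
Institution `m` chooses `c₀` from every applicant pool containing her, so no round of DA
ever adds `m` to the set of institutions that have rejected `c₀`. At the end `c₀` applies
to the first institution on her list that has not rejected her, which is therefore `m`
or one she ranks above `m`.
-/

theorem List.exists_find?_eq_some_idxOf_le {β : Type*} [DecidableEq β] {p : β → Bool} :
    ∀ {l : List β} {b : β}, b ∈ l → p b →
      ∃ a, l.find? p = some a ∧ a ∈ l ∧ l.idxOf a ≤ l.idxOf b
  | x :: t, b, hb, hpb => by
    by_cases hx : p x
    · exact ⟨x, by simp [hx], mem_cons_self, by simp⟩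
    · have hbx : b ≠ x := by rintro rfl; exact hx hpb
      obtain ⟨a, hfind, hmem, hle⟩ := exists_find?_eq_some_idxOf_le (mem_of_ne_of_mem hbx hb) hpb
      have hax : a ≠ x := by rintro rfl; exact hx (find?_some hfind)
      refine ⟨a, by simp [hx, hfind], mem_cons_of_mem x hmem, ?_⟩
      simpa [idxOf_cons_ne _ hax.symm, idxOf_cons_ne _ hbx.symm] using hle

namespace PMA

variable {α β : Type*} [Fintype α] [DecidableEq α] [DecidableEq β]
  {Ch : β → Finset α → Finset α} {prefs : α → List β} {c₀ : α} {m : β}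

theorem notMem_daRound (hguar : ∀ C : Finset α, c₀ ∈ C → c₀ ∈ Ch m C) {rej : α → Finset β}
    (hrej : m ∉ rej c₀) : m ∉ daRound Ch prefs rej c₀ := by
  unfold daRound
  split
  · exact hrej
  · rename_i m' happ
    split_ifs with hch
    · exact hrej
    · have hm' : m' ≠ m := by
        rintro rfl
        exact hch (hguar _ (Finset.mem_filter.mpr ⟨Finset.mem_univ _, happ⟩))
      simpa [hm'.symm] using hrej

theorem notMem_daRej [Fintype β] (hguar : ∀ C : Finset α, c₀ ∈ C → c₀ ∈ Ch m C) :
    m ∉ daRej Ch prefs c₀ :=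
  Function.Iterate.rec (fun rej : α → Finset β => m ∉ rej c₀) (Finset.notMem_empty m)
    (fun _ => notMem_daRound hguar) _

end PMA

/-- Sure-thing safety of candidate-proposing DA: if institution `m` always
chooses candidate `c₀` from any set containing her, then for any preference list of `c₀`
containing `m` (and any lists of the other candidates), DA assigns `c₀` either to `m` or
to an institution she ranked above `m`. -/
theorem da_sure_thing_safe {α β : Type*} [Fintype α] [DecidableEq α]
    [Fintype β] [DecidableEq β]
    (Ch : β → Finset α → Finset α) (prefs : α → List β) (c₀ : α) (m : β)
    (hguar : ∀ C : Finset α, c₀ ∈ C → c₀ ∈ Ch m C)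
    (hm : m ∈ prefs c₀) :
    ∃ m', daMatch Ch prefs c₀ = some m' ∧ m' ∈ prefs c₀ ∧
      (prefs c₀).idxOf m' ≤ (prefs c₀).idxOf m :=
  List.exists_find?_eq_some_idxOf_le hm (decide_eq_true (notMem_daRej hguar))
end
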